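/- arXiv:1203.0908 — 2 statements merged into one kernel-verified Lean document; each statement's English description precedes it below -/
import Mathlib

section
/- Let d ≥ 2, T > 1, and h_T : ℤ^d → ℝ⁺. Assume there exists R̃ ∼ 1 such that for all R ≥ R̃/2, ∫_{R<|x|≤2R} ∫_{|z|≤|z−x|} h_T(z) h_T(z−x) dz dx ≲ R² max{1, ln(√T/R)} for d = 2 and ≲ R² for d > 2, and ∫_{|x|≤4R̃} ∫_{|z|≤|z−x|} h_T(z) h_T(z−x) dz dx ≲ ln T for d = 2 and ≲ 1 for d > 2. With g_T as in the convolution lemma, then ∫_{√T<|x|} g_T(x) ∫_{|z|≤|z−x|} h_T(z) h_T(z−x) dz dx ≲ √T^{4−d}. -/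
open scoped ENNReal

noncomputable def latNorm {d : ℕ} (z : Fin d → ℤ) : ℝ :=
  ‖(fun i => (z i : ℝ) : Fin d → ℝ)‖

noncomputable def gT (d : ℕ) (T : ℝ) (z : Fin d → ℤ) : ℝ :=
  if d = 2 then
    (if latNorm z ≤ Real.sqrt T then Real.log (Real.sqrt T / (1 + latNorm z))
     else (Real.sqrt T / latNorm z) ^ 3)
  else
    (1 + latNorm z) ^ ((2 : ℝ) - d) *
      (if latNorm z ≤ Real.sqrt T then 1 else (Real.sqrt T / latNorm z) ^ 3)

/-! Split `√T < |x|` into the dyadic annuli `2^k √T < |x| ≤ 2^(k+1) √T`. On the `k`-th annulus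
`g_T ≤ √T^(2-d) 2^(-3k)`, while the half convolution has mass `≲ (2^k √T)^2` there (for `d = 2`
the logarithm `ln (√T/R)` is nonpositive once `R ≥ √T`). So the annulus contributes
`≲ √T^(4-d) 2^(-k)`, and the geometric series sums to `2`. -/

theorem setOf_lt_subset_iUnion_dyadic {α : Type*} (φ : α → ℝ) {S : ℝ} (hS : 0 < S) :
    {x | S < φ x} ⊆ ⋃ k : ℕ, {x | 2 ^ k * S < φ x ∧ φ x ≤ 2 * (2 ^ k * S)} := by
  intro x (hx : S < φ x)
  have hr : 1 < φ x / S := (one_lt_div hS).mpr hx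
  obtain ⟨n, hn_lt, hn_le⟩ := exists_mem_Ioc_zpow (zero_lt_one.trans hr) one_lt_two
  have hn : 0 ≤ n := by
    by_contra! hneg
    have : (2 : ℝ) ^ (n + 1) ≤ 1 := zpow_le_one_of_nonpos₀ one_le_two (by omega)
    linarith
  lift n to ℕ using hn
  refine Set.mem_iUnion.mpr ⟨n, ?_, ?_⟩
  · rw [zpow_natCast] at hn_lt
    rwa [← lt_div_iff₀ hS]
  · rw [show ((n : ℤ) + 1) = ((n + 1 : ℕ) : ℤ) by push_cast; ring, zpow_natCast, pow_succ] at hn_le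
    rw [div_le_iff₀ hS] at hn_le
    linarith

theorem gT_le_of_sqrt_lt {d : ℕ} (hd : 2 ≤ d) {T : ℝ} (hT : 0 < T) {x : Fin d → ℤ}
    (hx : √T < latNorm x) : gT d T x ≤ √T ^ ((2 : ℝ) - d) * (√T / latNorm x) ^ 3 := by
  have hS : 0 < √T := Real.sqrt_pos.mpr hT
  have hfar : ¬ latNorm x ≤ √T := not_le.mpr hx
  by_cases hd2 : d = 2
  · subst hd2
    simp [gT, hfar]
  · have hd' : (2 : ℝ) ≤ d := by exact_mod_cast hd
    have hx0 : 0 < latNorm x := hS.trans hx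
    simp only [gT, hd2, hfar, if_false]
    exact mul_le_mul_of_nonneg_right
      (Real.rpow_le_rpow_of_nonpos hS (by linarith) (by linarith)) (by positivity)

theorem max_one_log_div_eq_one {S R : ℝ} (hS : 0 < S) (hSR : S ≤ R) :
    max 1 (Real.log (S / R)) = 1 := by
  have hR : 0 < R := hS.trans_le hSR
  exact max_eq_left <|
    (Real.log_nonpos (div_pos hS hR).le ((div_le_one hR).mpr hSR)).trans zero_le_one

section FarField

variable {d : ℕ} {T C₀ : ℝ} (H : (Fin d → ℤ) → ℝ≥0∞)

theorem tsum_annulus_gT_mul_le (hd : 2 ≤ d) (hT : 0 < T) {R : ℝ} (hR : √T ≤ R)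
    (hH : ∑' x : {x : Fin d → ℤ // R < latNorm x ∧ latNorm x ≤ 2 * R}, H x.1
      ≤ ENNReal.ofReal (C₀ * R ^ 2)) :
    ∑' x : {x : Fin d → ℤ // R < latNorm x ∧ latNorm x ≤ 2 * R},
        ENNReal.ofReal (gT d T x.1) * H x.1
      ≤ ENNReal.ofReal (C₀ * √T ^ ((4 : ℝ) - d) * (√T / R)) := by
  set S := √T
  have hS : 0 < S := Real.sqrt_pos.mpr hT
  have hR0 : 0 < R := hS.trans_le hR
  have hg : ∀ x : {x : Fin d → ℤ // R < latNorm x ∧ latNorm x ≤ 2 * R},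
      gT d T x.1 ≤ S ^ ((2 : ℝ) - d) * (S / R) ^ 3 := fun x =>
    (gT_le_of_sqrt_lt hd hT (hR.trans_lt x.2.1)).trans <| mul_le_mul_of_nonneg_left
      (pow_le_pow_left₀ (div_nonneg hS.le (hR0.trans x.2.1).le)
        (div_le_div_of_nonneg_left hS.le hR0 x.2.1.le) 3) (by positivity)
  calc _ ≤ ∑' x : {x : Fin d → ℤ // R < latNorm x ∧ latNorm x ≤ 2 * R},
          ENNReal.ofReal (S ^ ((2 : ℝ) - d) * (S / R) ^ 3) * H x.1 :=
        ENNReal.tsum_le_tsum fun x => by gcongr; exact hg x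
    _ = ENNReal.ofReal (S ^ ((2 : ℝ) - d) * (S / R) ^ 3) *
          ∑' x : {x : Fin d → ℤ // R < latNorm x ∧ latNorm x ≤ 2 * R}, H x.1 :=
        ENNReal.tsum_mul_left
    _ ≤ ENNReal.ofReal (S ^ ((2 : ℝ) - d) * (S / R) ^ 3) * ENNReal.ofReal (C₀ * R ^ 2) := by
        gcongr
    _ = ENNReal.ofReal (C₀ * S ^ ((4 : ℝ) - d) * (S / R)) := by
        rw [← ENNReal.ofReal_mul (by positivity)]
        congr 1
        rw [show (4 : ℝ) - d = (2 - d) + 2 by ring, Real.rpow_add hS, Real.rpow_two]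
        field_simp

theorem tsum_sqrt_lt_gT_mul_le (hd : 2 ≤ d) (hT : 0 < T)
    (hH : ∀ R, √T ≤ R → ∑' x : {x : Fin d → ℤ // R < latNorm x ∧ latNorm x ≤ 2 * R}, H x.1
      ≤ ENNReal.ofReal (C₀ * R ^ 2)) :
    ∑' x : {x : Fin d → ℤ // √T < latNorm x}, ENNReal.ofReal (gT d T x.1) * H x.1
      ≤ ENNReal.ofReal (2 * C₀ * √T ^ ((4 : ℝ) - d)) := by
  set S := √T
  have hS : 0 < S := Real.sqrt_pos.mpr hT
  set F : (Fin d → ℤ) → ℝ≥0∞ := fun x => ENNReal.ofReal (gT d T x) * H x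
  calc ∑' x : {x : Fin d → ℤ // S < latNorm x}, F x.1
      ≤ ∑' x : ⋃ k : ℕ, {x : Fin d → ℤ | 2 ^ k * S < latNorm x ∧ latNorm x ≤ 2 * (2 ^ k * S)},
          F x :=
        ENNReal.tsum_mono_subtype F (setOf_lt_subset_iUnion_dyadic latNorm hS)
    _ ≤ ∑' k : ℕ, ∑' x : {x : Fin d → ℤ // 2 ^ k * S < latNorm x ∧ latNorm x ≤ 2 * (2 ^ k * S)},
          F x.1 :=
        ENNReal.tsum_iUnion_le_tsum F _
    _ ≤ ∑' k : ℕ, ENNReal.ofReal (C₀ * S ^ ((4 : ℝ) - d)) * ENNReal.ofReal (2⁻¹ ^ k) := by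
        refine ENNReal.tsum_le_tsum fun k => ?_
        have hSR : S ≤ 2 ^ k * S := le_mul_of_one_le_left hS.le (one_le_pow₀ one_le_two)
        refine (tsum_annulus_gT_mul_le H hd hT hSR (hH _ hSR)).trans_eq ?_
        rw [← ENNReal.ofReal_mul' (by positivity), show √T = S from rfl,
          div_mul_cancel_right₀ hS.ne', inv_pow]
    _ = ENNReal.ofReal (2 * C₀ * S ^ ((4 : ℝ) - d)) := by
        rw [ENNReal.tsum_mul_left, ← ENNReal.ofReal_tsum_of_nonneg (fun _ => by positivity)
          (summable_geometric_of_lt_one (by norm_num) (by norm_num)), tsum_geometric_inv_two,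
          ← ENNReal.ofReal_mul' zero_le_two, mul_comm, mul_assoc]

end FarField

theorem stmt_5_general (d : ℕ) (hd : 2 ≤ d) (C₀ Rt : ℝ) (hC₀ : 0 < C₀) (hRt' : Rt ≤ 2) :
    ∃ C : ℝ, 0 < C ∧ ∀ T : ℝ, 1 < T →
      ∀ h : (Fin d → ℤ) → ℝ, (∀ z, 0 ≤ h z) →
      -- dyadic annulus bound on the half convolution
      (∀ R : ℝ, Rt / 2 ≤ R →
        (∑' x : {x : Fin d → ℤ // R < latNorm x ∧ latNorm x ≤ 2 * R},
          ∑' z : {z : Fin d → ℤ // latNorm z ≤ latNorm (z - x.1)},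
            ENNReal.ofReal (h z.1 * h (z.1 - x.1)))
          ≤ ENNReal.ofReal (C₀ * (if d = 2 then R ^ 2 * max 1 (Real.log (Real.sqrt T / R))
              else R ^ 2))) →
      -- bound near the origin
      (∑' x : {x : Fin d → ℤ // latNorm x ≤ 4 * Rt},
          ∑' z : {z : Fin d → ℤ // latNorm z ≤ latNorm (z - x.1)},
            ENNReal.ofReal (h z.1 * h (z.1 - x.1)))
        ≤ ENNReal.ofReal (C₀ * (if d = 2 then Real.log T else 1)) →
      (∑' x : {x : Fin d → ℤ // Real.sqrt T < latNorm x},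
          ENNReal.ofReal (gT d T x.1) *
            ∑' z : {z : Fin d → ℤ // latNorm z ≤ latNorm (z - x.1)},
              ENNReal.ofReal (h z.1 * h (z.1 - x.1)))
        ≤ ENNReal.ofReal (C * Real.sqrt T ^ ((4 : ℝ) - d)) := by
  refine ⟨2 * C₀, by positivity, fun T hT h _ hAnnulus _ => ?_⟩
  have hS : 1 ≤ √T := Real.one_le_sqrt.mpr hT.le
  refine tsum_sqrt_lt_gT_mul_le (fun x => ∑' z : {z : Fin d → ℤ // latNorm z ≤ latNorm (z - x)},
    ENNReal.ofReal (h z.1 * h (z.1 - x))) hd (by positivity) fun R hR => ?_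
  refine (hAnnulus R (by linarith)).trans_eq ?_
  rw [max_one_log_div_eq_one (by positivity) hR, mul_one, ite_self]

/-- Far-field part of the convolution estimate: under the dyadic bounds on the (half-)
convolution of `h_T`, the contribution of the region `|x| > √T` is `≲ √T^{4−d}`. -/
theorem stmt_5 (d : ℕ) (hd : 2 ≤ d) (C₀ Rt : ℝ) (hC₀ : 0 < C₀) (hRt : 1 ≤ Rt) (hRt' : Rt ≤ 2) :
    ∃ C : ℝ, 0 < C ∧ ∀ T : ℝ, 1 < T →
      ∀ h : (Fin d → ℤ) → ℝ, (∀ z, 0 ≤ h z) →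
      -- dyadic annulus bound on the half convolution
      (∀ R : ℝ, Rt / 2 ≤ R →
        (∑' x : {x : Fin d → ℤ // R < latNorm x ∧ latNorm x ≤ 2 * R},
          ∑' z : {z : Fin d → ℤ // latNorm z ≤ latNorm (z - x.1)},
            ENNReal.ofReal (h z.1 * h (z.1 - x.1)))
          ≤ ENNReal.ofReal (C₀ * (if d = 2 then R ^ 2 * max 1 (Real.log (Real.sqrt T / R))
              else R ^ 2))) →
      -- bound near the origin
      (∑' x : {x : Fin d → ℤ // latNorm x ≤ 4 * Rt},
          ∑' z : {z : Fin d → ℤ // latNorm z ≤ latNorm (z - x.1)},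
            ENNReal.ofReal (h z.1 * h (z.1 - x.1)))
        ≤ ENNReal.ofReal (C₀ * (if d = 2 then Real.log T else 1)) →
      (∑' x : {x : Fin d → ℤ // Real.sqrt T < latNorm x},
          ENNReal.ofReal (gT d T x.1) *
            ∑' z : {z : Fin d → ℤ // latNorm z ≤ latNorm (z - x.1)},
              ENNReal.ofReal (h z.1 * h (z.1 - x.1)))
        ≤ ENNReal.ofReal (C * Real.sqrt T ^ ((4 : ℝ) - d)) :=
  stmt_5_general d hd C₀ Rt hC₀ hRt'
end

section
/- Let A : ℤ^d → ℝ^{d×d} be a field of diagonal matrices with entries in [α,β], 0 < α ≤ β. Let φ_T and φ_{2T} be stationary solutions of T^{−1}φ_T − ∇*·A(ξ+∇φ_T) = 0 and (2T)^{−1}φ_{2T} − ∇*·A(ξ+∇φ_{2T}) = 0 on ℤ^d with ⟨φ_T⟩ = ⟨φ_{2T}⟩ = 0 and finite second moments. Define ψ_T := T(φ_{2T} − φ_T) and A_T by ξ·A_Tξ = ⟨(ξ+∇φ_T)·A(ξ+∇φ_T)⟩. Then ξ·(A_{2T} − A_T)ξ = −T^{−2}(⟨ψ_T φ_T⟩ +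 ½⟨ψ_T φ_{2T}⟩). -/
open MeasureTheory Matrix

/-!
Test the corrector equations for `φ_T` and `φ_{2T}` with the same field `φ_{2T} − φ_T`. Since `A` is
diagonal, hence symmetric, the two cross energies `⟨(ξ+∇φ_T)·A(ξ+∇φ_{2T})⟩` coincide, and adding the
two tested equations telescopes the energies into `ξ·(A_{2T} − A_T)ξ`, leaving only the zeroth-order
terms `T⁻¹⟨φ_T (φ_{2T} − φ_T)⟩ + (2T)⁻¹⟨φ_{2T} (φ_{2T} − φ_T)⟩`.
-/

theorem Matrix.IsSymm.dotProduct_mulVec_comm {n R : Type*} [Fintype n] [CommSemiring R]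
    {M : Matrix n n R} (hM : M.IsSymm) (x y : n → R) : x ⬝ᵥ M *ᵥ y = y ⬝ᵥ M *ᵥ x := by
  rw [dotProduct_mulVec, dotProduct_comm, ← mulVec_transpose, hM.eq]

theorem integral_dotProduct_mulVec_sub_add {Ω n : Type*} [MeasurableSpace Ω] [Fintype n]
    {P : Measure Ω} {A : Ω → Matrix n n ℝ} (hA : ∀ ω, (A ω).IsSymm) {a b : Ω → n → ℝ}
    (haa : Integrable (fun ω => a ω ⬝ᵥ A ω *ᵥ a ω) P)
    (hbb : Integrable (fun ω => b ω ⬝ᵥ A ω *ᵥ b ω) P)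
    (hab : Integrable (fun ω => a ω ⬝ᵥ A ω *ᵥ b ω) P) :
    (∫ ω, a ω ⬝ᵥ A ω *ᵥ (b ω - a ω) ∂P) + ∫ ω, b ω ⬝ᵥ A ω *ᵥ (b ω - a ω) ∂P
      = (∫ ω, b ω ⬝ᵥ A ω *ᵥ b ω ∂P) - ∫ ω, a ω ⬝ᵥ A ω *ᵥ a ω ∂P := by
  have hba : ∀ ω, b ω ⬝ᵥ A ω *ᵥ a ω = a ω ⬝ᵥ A ω *ᵥ b ω :=
    fun ω => (hA ω).dotProduct_mulVec_comm _ _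
  simp only [mulVec_sub, dotProduct_sub, hba]
  rw [integral_sub hab haa, integral_sub hbb hab]
  ring

theorem stmt_9_general {Ω : Type*} [MeasurableSpace Ω] (P : Measure Ω)
    (d : ℕ) (T : ℝ) (hT : 0 < T)
    (A : Ω → Matrix (Fin d) (Fin d) ℝ)
    (hdiag : ∀ ω i j, i ≠ j → A ω i j = 0)
    (ξ : Fin d → ℝ)
    (φT φ2T : Ω → ℝ) (DφT Dφ2T : Ω → Fin d → ℝ)
    -- integrability of the energy densities
    (hE11 : Integrable (fun ω => (ξ + DφT ω) ⬝ᵥ (A ω).mulVec (ξ + DφT ω)) P)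
    (hE22 : Integrable (fun ω => (ξ + Dφ2T ω) ⬝ᵥ (A ω).mulVec (ξ + Dφ2T ω)) P)
    (hE12 : Integrable (fun ω => (ξ + DφT ω) ⬝ᵥ (A ω).mulVec (ξ + Dφ2T ω)) P)
    -- weak formulation of the corrector equation for φ_T tested with ψ_T/T = φ_{2T} − φ_T
    (hVFT : T⁻¹ * (∫ ω, φT ω * (φ2T ω - φT ω) ∂P)
        + (∫ ω, (ξ + DφT ω) ⬝ᵥ (A ω).mulVec (Dφ2T ω - DφT ω) ∂P) = 0)
    -- weak formulation of the corrector equation for φ_{2T} tested with the same field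
    (hVF2T : (2 * T)⁻¹ * (∫ ω, φ2T ω * (φ2T ω - φT ω) ∂P)
        + (∫ ω, (ξ + Dφ2T ω) ⬝ᵥ (A ω).mulVec (Dφ2T ω - DφT ω) ∂P) = 0)
    (AT A2T : Matrix (Fin d) (Fin d) ℝ)
    (hAT : ξ ⬝ᵥ AT.mulVec ξ = ∫ ω, (ξ + DφT ω) ⬝ᵥ (A ω).mulVec (ξ + DφT ω) ∂P)
    (hA2T : ξ ⬝ᵥ A2T.mulVec ξ = ∫ ω, (ξ + Dφ2T ω) ⬝ᵥ (A ω).mulVec (ξ + Dφ2T ω) ∂P)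
    (ψ : Ω → ℝ) (hψ : ψ = fun ω => T * (φ2T ω - φT ω)) :
    ξ ⬝ᵥ (A2T - AT).mulVec ξ
      = -(T ^ 2)⁻¹ * ((∫ ω, ψ ω * φT ω ∂P) + (1 / 2) * ∫ ω, ψ ω * φ2T ω ∂P) := by
  subst hψ
  have hsymm : ∀ ω, (A ω).IsSymm := fun ω => IsDiag.isSymm fun i j hij => hdiag ω i j hij
  have henergy := integral_dotProduct_mulVec_sub_add hsymm hE11 hE22 hE12
  simp only [add_sub_add_left_eq_sub] at henergy
  simp only [mul_assoc, integral_const_mul, mul_comm (φ2T _ - φT _)]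
  rw [sub_mulVec, dotProduct_sub, hAT, hA2T, ← henergy]
  field_simp at hVFT hVF2T ⊢
  linear_combination 2 * hVFT + hVF2T

/-- Step 1 of the proof of Theorem 1: the discrete-in-`T` derivative formula
`ξ·(A_{2T} − A_T)ξ = −T^{−2}(⟨ψ_T φ_T⟩ + ½⟨ψ_T φ_{2T}⟩)` with `ψ_T = T(φ_{2T} − φ_T)`,
assuming the weak (stationary) formulations of the modified corrector equations. -/
theorem stmt_9 {Ω : Type*} [MeasurableSpace Ω] (P : Measure Ω) [IsProbabilityMeasure P]
    (d : ℕ) (α β T : ℝ) (hα : 0 < α) (hαβ : α ≤ β) (hT : 0 < T)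
    (A : Ω → Matrix (Fin d) (Fin d) ℝ)
    (hdiag : ∀ ω i j, i ≠ j → A ω i j = 0)
    (hbound : ∀ ω i, A ω i i ∈ Set.Icc α β)
    (ξ : Fin d → ℝ)
    (φT φ2T : Ω → ℝ) (DφT Dφ2T : Ω → Fin d → ℝ)
    (hmean : ∫ ω, φT ω ∂P = 0) (hmean2 : ∫ ω, φ2T ω ∂P = 0)
    (hL2 : MemLp φT 2 P) (hL2' : MemLp φ2T 2 P)
    -- integrability of the energy densities
    (hE11 : Integrable (fun ω => (ξ + DφT ω) ⬝ᵥ (A ω).mulVec (ξ + DφT ω)) P)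
    (hE22 : Integrable (fun ω => (ξ + Dφ2T ω) ⬝ᵥ (A ω).mulVec (ξ + Dφ2T ω)) P)
    (hE12 : Integrable (fun ω => (ξ + DφT ω) ⬝ᵥ (A ω).mulVec (ξ + Dφ2T ω)) P)
    (hE21 : Integrable (fun ω => (ξ + Dφ2T ω) ⬝ᵥ (A ω).mulVec (ξ + DφT ω)) P)
    -- weak formulation of the corrector equation for φ_T tested with ψ_T/T = φ_{2T} − φ_T
    (hVFT : T⁻¹ * (∫ ω, φT ω * (φ2T ω - φT ω) ∂P)
        + (∫ ω, (ξ + DφT ω) ⬝ᵥ (A ω).mulVec (Dφ2T ω - DφT ω) ∂P) = 0)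
    -- weak formulation of the corrector equation for φ_{2T} tested with the same field
    (hVF2T : (2 * T)⁻¹ * (∫ ω, φ2T ω * (φ2T ω - φT ω) ∂P)
        + (∫ ω, (ξ + Dφ2T ω) ⬝ᵥ (A ω).mulVec (Dφ2T ω - DφT ω) ∂P) = 0)
    (AT A2T : Matrix (Fin d) (Fin d) ℝ) (hATsym : AT.IsSymm) (hA2Tsym : A2T.IsSymm)
    (hAT : ξ ⬝ᵥ AT.mulVec ξ = ∫ ω, (ξ + DφT ω) ⬝ᵥ (A ω).mulVec (ξ + DφT ω) ∂P)
    (hA2T : ξ ⬝ᵥ A2T.mulVec ξ = ∫ ω, (ξ + Dφ2T ω) ⬝ᵥ (A ω).mulVec (ξ + Dφ2T ω) ∂P)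
    (ψ : Ω → ℝ) (hψ : ψ = fun ω => T * (φ2T ω - φT ω)) :
    ξ ⬝ᵥ (A2T - AT).mulVec ξ
      = -(T ^ 2)⁻¹ * ((∫ ω, ψ ω * φT ω ∂P) + (1 / 2) * ∫ ω, ψ ω * φ2T ω ∂P) :=
  stmt_9_general P d T hT A hdiag ξ φT φ2T DφT Dφ2T hE11 hE22 hE12 hVFT hVF2T AT A2T hAT hA2T ψ hψ
end
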